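/- arXiv:1604.08161 — 2 statements merged into one kernel-verified Lean document; each statement's English description precedes it below -/
import Mathlib

section
/- Suppose n, t ∈ ℕ with n > 3t, and suppose two correct processes each received messages echo(v1) and echo(v2) respectively from strictly more than (n+t)/2 of the n processes, where at most t processes are faulty and every correct process sends at most one echo message. Then v1 = v2. -/
theorem echo_agreement {α V : Type*} [DecidableEq α]
    (n t : ℕ) (hn : n > 3 * t) (P F E1 E2 : Finset α)
    (hP : P.card = n) (hFsub : F ⊆ P) (hF : F.card ≤ t)
    (e1 e2 : α → Option V) (v1 v2 : V)
    (hcorrect : ∀ p ∈ P, p ∉ F → ∀ a b, e1 p = some a → e2 p = some b → a = b)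
    (h1 : E1 ⊆ P) (h2 : E2 ⊆ P)
    (hE1 : ∀ p ∈ E1, e1 p = some v1) (hE2 : ∀ p ∈ E2, e2 p = some v2)
    (hc1 : 2 * E1.card > n + t) (hc2 : 2 * E2.card > n + t) :
    v1 = v2 := by
  have hunion : (E1 ∪ E2).card ≤ n := by
    rw [← hP]; exact Finset.card_le_card (Finset.union_subset h1 h2)
  have hsum : (E1 ∩ E2).card + (E1 ∪ E2).card = E1.card + E2.card :=
    Finset.card_inter_add_card_union E1 E2
  have hinter : (E1 ∩ E2).card > F.card := by omega
  have : ¬ (E1 ∩ E2 ⊆ F) := fun h => absurd (Finset.card_le_card h) (by omega)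
  obtain ⟨p, hp, hpF⟩ := Finset.not_subset.mp this
  have hpP : p ∈ P := h1 (Finset.mem_inter.mp hp).1
  exact hcorrect p hpP hpF v1 v2 (hE1 p (Finset.mem_inter.mp hp).1)
    (hE2 p (Finset.mem_inter.mp hp).2)
end

section
/- A register satisfying the three safety properties (read-followed-by-write, write-followed-by-read, and no-read-inversion, stated over indices into the write history) admits a linear order on its operations consistent with real-time order in which every read returns the value of the latest preceding write: concretely, if reads are assigned indices r : Reads → ℕ into the write history and these indices are monotone with respect to the real-time precedence relation on reads (read r1 before read r2 implies index r1 ≤ index r2), then there is a total order extending the partial real-time order in which equal-index reads are consecutive after their write. -/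
/-- Operations: `Sum.inl k` is the `k`-th write; `Sum.inr r` is a read,
carrying its index into the write history via `idx`. -/
theorem linearization_exists {Rd : Type*} [Fintype Rd]
    (prec : (ℕ ⊕ Rd) → (ℕ ⊕ Rd) → Prop)
    (hirr : ∀ a, ¬ prec a a)
    (htrans : ∀ a b c, prec a b → prec b c → prec a c)
    (idx : Rd → ℕ)
    (hwrites : ∀ x y : ℕ, x < y → prec (Sum.inl x) (Sum.inl y))
    (h1 : ∀ (r : Rd) (y : ℕ), prec (Sum.inr r) (Sum.inl y) → idx r < y)
    (h2 : ∀ (x : ℕ) (r : Rd), prec (Sum.inl x) (Sum.inr r) → x ≤ idx r)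
    (h3 : ∀ r1 r2 : Rd, prec (Sum.inr r1) (Sum.inr r2) → idx r1 ≤ idx r2) :
    ∃ le : (ℕ ⊕ Rd) → (ℕ ⊕ Rd) → Prop, IsLinearOrder (ℕ ⊕ Rd) le ∧
      (∀ a b, prec a b → le a b) ∧
      (∀ r : Rd, le (Sum.inl (idx r)) (Sum.inr r) ∧
                 le (Sum.inr r) (Sum.inl (idx r + 1))) := by
  -- a partial order on reads extending prec
  set r' : Rd → Rd → Prop := fun a b => a = b ∨ prec (Sum.inr a) (Sum.inr b) with hr'
  haveI : IsPartialOrder Rd r' :=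
    { refl := fun a => Or.inl rfl
      trans := by
        rintro a b c (rfl | hab) (rfl | hbc)
        · exact Or.inl rfl
        · exact Or.inr hbc
        · exact Or.inr hab
        · exact Or.inr (htrans _ _ _ hab hbc)
      antisymm := by
        rintro a b (rfl | hab) (hba | hba)
        · rfl
        · rfl
        · exact hba.symm
        · exact absurd (htrans _ _ _ hab hba) (hirr _) }
  obtain ⟨s, hs, hrs⟩ := extend_partialOrder r'
  -- the candidate order
  refine ⟨fun a b => match a, b with
    | Sum.inl x, Sum.inl y => x ≤ y
    | Sum.inl x, Sum.inr r => x ≤ idx r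
    | Sum.inr r, Sum.inl y => idx r < y
    | Sum.inr r1, Sum.inr r2 => idx r1 < idx r2 ∨ (idx r1 = idx r2 ∧ s r1 r2), ?_, ?_, ?_⟩
  · haveI := hs
    refine { refl := ?_, trans := ?_, antisymm := ?_, total := ?_ }
    · rintro (x | r)
      · exact le_refl x
      · exact Or.inr ⟨rfl, refl_of s r⟩
    · rintro (x | r) (y | q) (z | p) hab hbc <;> simp only at *
      · exact hab.trans hbc
      · exact hab.trans hbc
      · exact (hab.trans_lt hbc).le
      · exact hab.trans (by rcases hbc with h | ⟨h, _⟩ <;> omega)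
      · exact hab.trans_le hbc
      · exact Or.inl (lt_of_lt_of_le hab hbc)
      · rcases hab with h | ⟨h, _⟩
        · exact h.trans hbc
        · exact h ▸ hbc
      · rcases hab with h | ⟨he, hsab⟩
        · rcases hbc with h2 | ⟨h2, _⟩
          · exact Or.inl (h.trans h2)
          · exact Or.inl (h2 ▸ h)
        · rcases hbc with h2 | ⟨h2e, hsbc⟩
          · exact Or.inl (he ▸ h2)
          · exact Or.inr ⟨he.trans h2e, trans_of s hsab hsbc⟩
    · rintro (x | r) (y | q) hab hba <;> simp only at *
      · exact congrArg Sum.inl (le_antisymm hab hba)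
      · omega
      · omega
      · rcases hab with h | ⟨he, hsab⟩
        · rcases hba with h2 | ⟨h2, _⟩ <;> omega
        · rcases hba with h2 | ⟨h2e, hsba⟩
          · omega
          · exact congrArg Sum.inr (antisymm hsab hsba)
    · rintro (x | r) (y | q) <;> simp only
      · exact le_total x y
      · omega
      · omega
      · rcases lt_trichotomy (idx r) (idx q) with h | h | h
        · exact Or.inl (Or.inl h)
        · rcases total_of s r q with hsq | hsq
          · exact Or.inl (Or.inr ⟨h, hsq⟩)
          · exact Or.inr (Or.inr ⟨h.symm, hsq⟩)
        · exact Or.inr (Or.inl h)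
  · rintro (x | r) (y | q) hab <;> simp only
    · by_contra h
      push_neg at h
      rcases Nat.lt_or_ge y x with h2 | h2
      · exact hirr _ (htrans _ _ _ hab (hwrites _ _ h2))
      · exact absurd (le_antisymm (by omega) h2 ▸ hab) (hirr _)
    · exact h2 _ _ hab
    · exact h1 _ _ hab
    · rcases Nat.lt_or_ge (idx r) (idx q) with h | h
      · exact Or.inl h
      · have he : idx r = idx q := le_antisymm (h3 _ _ hab) h
        exact Or.inr ⟨he, hrs _ _ (Or.inr hab)⟩
  · intro r
    exact ⟨le_refl _, Nat.lt_succ_self _⟩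
end
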